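/- arXiv:2307.03922 — 6 statements merged into one kernel-verified Lean document; each statement's English description precedes it below -/
import Mathlib

section
/- (Lemma 1.) Suppose there exist a symmetric m×m real matrix N and a real number c > 0 such that fᵢᵀ N fᵢ = c for every i = 1,…,d. Then the set {M(w) : w ∈ P} of information matrices of all designs supported on the d given points has affine dimension s − 1; that is, the direction of the affine span of {f₁f₁ᵀ, …, f_d f_dᵀ} in the space of m×m real matrices has dimension s − 1. -/
open Matrix BigOperators

noncomputable section

/-- The information matrix `M(w) = ∑ i, wᵢ fᵢ fᵢᵀ`. -/
def infoM {d m : ℕ} (f : Fin d → Fin m → ℝ) (w : Fin d → ℝ) :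
    Matrix (Fin m) (Fin m) ℝ :=
  ∑ i, w i • Matrix.vecMulVec (f i) (f i)

/-- The probability simplex `P ⊆ ℝ^d`. -/
def simplexP (d : ℕ) : Set (Fin d → ℝ) :=
  {w | (∀ i, 0 ≤ w i) ∧ ∑ i, w i = 1}

/-- The polytope of optimal weights `P⋆ = {w ∈ P : M(w) = M⋆}`. -/
def Pstar {d m : ℕ} (f : Fin d → Fin m → ℝ)
    (Mstar : Matrix (Fin m) (Fin m) ℝ) : Set (Fin d → ℝ) :=
  {w | w ∈ simplexP d ∧ infoM f w = Mstar}

/-- `s`, the dimension of the linear span of `{f₁f₁ᵀ, …, f_d f_dᵀ}`. -/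
def spanDim {d m : ℕ} (f : Fin d → Fin m → ℝ) : ℕ :=
  Module.finrank ℝ (Submodule.span ℝ (Set.range fun i => Matrix.vecMulVec (f i) (f i)))

/-- `v` is an extreme point of the convex set `K`: `v ∈ K`, and whenever
`v = α • w₁ + (1 - α) • w₂` with `w₁, w₂ ∈ K` and `α ∈ (0,1)`, then `w₁ = w₂ = v`. -/
def IsExtremePt {E : Type*} [AddCommGroup E] [Module ℝ E] (K : Set E) (v : E) : Prop :=
  v ∈ K ∧ ∀ w₁ ∈ K, ∀ w₂ ∈ K, ∀ α : ℝ, 0 < α → α < 1 →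
    v = α • w₁ + (1 - α) • w₂ → w₁ = v ∧ w₂ = v

/-- The support `S(w) = {i : wᵢ ≠ 0}`. -/
def supp {d : ℕ} (w : Fin d → ℝ) : Set (Fin d) := {i | w i ≠ 0}

/-- Key linear-algebra lemma: if a linear functional takes a common nonzero value on all
points `x i`, the vector span of the range has dimension one less than the linear span. -/
lemma vectorSpan_finrank_eq {V : Type*} [AddCommGroup V] [Module ℝ V]
    [FiniteDimensional ℝ V] {ι : Type*} [Nonempty ι] (x : ι → V)
    (L : V →ₗ[ℝ] ℝ) (c : ℝ) (hc : c ≠ 0) (h : ∀ i, L (x i) = c) :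
    Module.finrank ℝ (vectorSpan ℝ (Set.range x)) =
      Module.finrank ℝ (Submodule.span ℝ (Set.range x)) - 1 := by
  classical
  set W := vectorSpan ℝ (Set.range x) with hW
  obtain ⟨i0⟩ := ‹Nonempty ι›
  have hWker : W ≤ LinearMap.ker L := by
    rw [hW, vectorSpan_def]
    refine Submodule.span_le.2 ?_
    rintro v ⟨a, ha, b, hb, rfl⟩
    obtain ⟨i, rfl⟩ := ha
    obtain ⟨j, rfl⟩ := hb
    simp [LinearMap.mem_ker, vsub_eq_sub, map_sub, h i, h j]
  have hx0 : x i0 ≠ 0 := by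
    intro h0; apply hc; rw [← h i0, h0, map_zero]
  have hspan : Submodule.span ℝ (Set.range x) = W ⊔ Submodule.span ℝ {x i0} := by
    apply le_antisymm
    · refine Submodule.span_le.2 ?_
      rintro v ⟨i, rfl⟩
      have h1 : x i - x i0 ∈ W :=
        vsub_mem_vectorSpan ℝ (Set.mem_range_self i) (Set.mem_range_self i0)
      have h2 : x i0 ∈ Submodule.span ℝ ({x i0} : Set V) := Submodule.mem_span_singleton_self _
      have := Submodule.add_mem (W ⊔ Submodule.span ℝ {x i0})
        (Submodule.mem_sup_left h1) (Submodule.mem_sup_right h2)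
      simpa using this
    · refine sup_le ?_ ?_
      · rw [hW, vectorSpan_def]
        refine Submodule.span_le.2 ?_
        rintro v ⟨a, ha, b, hb, rfl⟩
        exact Submodule.sub_mem _ (Submodule.subset_span ha) (Submodule.subset_span hb)
      · exact Submodule.span_mono (by simp)
  have hinf : W ⊓ Submodule.span ℝ ({x i0} : Set V) = ⊥ := by
    refine (Submodule.eq_bot_iff _).2 ?_
    rintro v ⟨hv1, hv2⟩
    obtain ⟨a, rfl⟩ := Submodule.mem_span_singleton.1 hv2
    have : L (a • x i0) = 0 := hWker hv1
    rw [LinearMap.map_smul, h i0, smul_eq_mul] at this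
    rcases mul_eq_zero.1 this with ha | hca
    · simp [ha]
    · exact absurd hca hc
  have hkey := Submodule.finrank_sup_add_finrank_inf_eq W (Submodule.span ℝ ({x i0} : Set V))
  rw [hinf, finrank_span_singleton hx0] at hkey
  simp only [finrank_bot, add_zero] at hkey
  rw [hspan, hkey]
  omega

lemma infoM_single {d m : ℕ} (f : Fin d → Fin m → ℝ) (i : Fin d) :
    infoM f (Pi.single i 1) = Matrix.vecMulVec (f i) (f i) := by
  classical
  unfold infoM
  rw [Finset.sum_eq_single i]
  · simp
  · intro j _ hj; simp [Pi.single_apply, hj]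
  · simp

lemma affineSpan_image_eq {d m : ℕ} (hd : 0 < d) (f : Fin d → Fin m → ℝ) :
    affineSpan ℝ (infoM f '' simplexP d) =
      affineSpan ℝ (Set.range fun i => Matrix.vecMulVec (f i) (f i)) := by
  classical
  apply le_antisymm
  · refine affineSpan_le.2 ?_
    rintro M ⟨w, ⟨hw0, hw1⟩, rfl⟩
    have := affineCombination_mem_affineSpan (k := ℝ)
      (s := (Finset.univ : Finset (Fin d))) (w := w) (by simpa using hw1)
      (fun i => Matrix.vecMulVec (f i) (f i))
    rwa [Finset.affineCombination_eq_linear_combination _ _ _ (by simpa using hw1)] at this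
  · refine affineSpan_le.2 ?_
    rintro M ⟨i, rfl⟩
    apply subset_affineSpan
    refine ⟨Pi.single i 1, ⟨?_, ?_⟩, infoM_single f i⟩
    · intro j
      rcases eq_or_ne j i with rfl | hj
      · simp
      · simp [Pi.single_apply, hj]
    · simp

/-- Lemma 1: if `fᵢᵀ N fᵢ = c > 0` for all `i` (with `N` symmetric),
then the set `{M(w) : w ∈ P}` has affine dimension `s - 1`; that is, the direction
of the affine span of `{f₁f₁ᵀ, …, f_d f_dᵀ}` has dimension `s - 1`. -/
theorem stmt1 (d m : ℕ) (hd : 0 < d) (hm : 0 < m)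
    (f : Fin d → Fin m → ℝ)
    (N : Matrix (Fin m) (Fin m) ℝ) (hN : N.IsSymm)
    (c : ℝ) (hc : 0 < c)
    (hfi : ∀ i, f i ⬝ᵥ N.mulVec (f i) = c) :
    Module.finrank ℝ (affineSpan ℝ (infoM f '' simplexP d)).direction = spanDim f - 1 ∧
    Module.finrank ℝ
        (affineSpan ℝ (Set.range fun i => Matrix.vecMulVec (f i) (f i))).direction
      = spanDim f - 1 := by
  classical
  have : Nonempty (Fin d) := ⟨⟨0, hd⟩⟩
  set L : Matrix (Fin m) (Fin m) ℝ →ₗ[ℝ] ℝ :=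
    (Matrix.traceLinearMap (Fin m) ℝ ℝ).comp (LinearMap.mulLeft ℝ N) with hL
  have hLval : ∀ i, L (Matrix.vecMulVec (f i) (f i)) = c := by
    intro i
    rw [← hfi i]
    simp only [hL, LinearMap.comp_apply, LinearMap.mulLeft_apply, Matrix.traceLinearMap_apply]
    simp [Matrix.trace, Matrix.diag, Matrix.mul_apply, Matrix.vecMulVec_apply,
      dotProduct, Matrix.mulVec, Finset.mul_sum, mul_comm, mul_left_comm]
  have hmain :
      Module.finrank ℝ
          (affineSpan ℝ (Set.range fun i => Matrix.vecMulVec (f i) (f i))).direction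
        = spanDim f - 1 := by
    rw [direction_affineSpan, spanDim]
    exact vectorSpan_finrank_eq _ L c (ne_of_gt hc) hLval
  refine ⟨?_, hmain⟩
  rw [affineSpan_image_eq hd f]
  exact hmain
end
end

section
/- (Lemma 2.) Suppose the normalization hypothesis holds (there exist a symmetric m×m real matrix N and c > 0 with fᵢᵀ N fᵢ = c for all i and tr(N M⋆) = c), and suppose there exists w̃ ∈ P⋆ with w̃ᵢ > 0 for every i = 1,…,d. Then the affine dimension of the polytope P⋆ (the dimension of the direction of its affine span in ℝ^d) equals t = d − s. -/
open Matrix BigOperators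

noncomputable section

def infoL {d m : ℕ} (f : Fin d → Fin m → ℝ) :
    (Fin d → ℝ) →ₗ[ℝ] Matrix (Fin m) (Fin m) ℝ where
  toFun w := infoM f w
  map_add' x y := by
    simp [infoM, add_smul, Finset.sum_add_distrib]
  map_smul' a x := by
    simp [infoM, smul_smul, Finset.smul_sum]

lemma infoL_apply {d m : ℕ} (f : Fin d → Fin m → ℝ) (w : Fin d → ℝ) :
    infoL f w = infoM f w := rfl

lemma range_infoL {d m : ℕ} (f : Fin d → Fin m → ℝ) :
    LinearMap.range (infoL f)
      = Submodule.span ℝ (Set.range fun i => Matrix.vecMulVec (f i) (f i)) := by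
  apply le_antisymm
  · rintro _ ⟨w, rfl⟩
    rw [infoL_apply, infoM]
    exact Submodule.sum_mem _ fun i _ =>
      Submodule.smul_mem _ _ (Submodule.subset_span (Set.mem_range_self i))
  · rw [Submodule.span_le]
    rintro x hx
    obtain ⟨i, rfl⟩ := hx
    refine ⟨Pi.single i 1, ?_⟩
    simp [infoL_apply, infoM, Pi.single_apply, ite_smul]

lemma trace_mul_vecMulVec {m : ℕ} (N : Matrix (Fin m) (Fin m) ℝ) (x : Fin m → ℝ) :
    Matrix.trace (N * Matrix.vecMulVec x x) = x ⬝ᵥ N.mulVec x := by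
  simp only [Matrix.trace, Matrix.diag, Matrix.mul_apply, Matrix.vecMulVec_apply,
    dotProduct, Matrix.mulVec, Finset.mul_sum]
  refine Finset.sum_congr rfl fun j _ => Finset.sum_congr rfl fun k _ => ?_
  ring

lemma trace_mul_infoM {d m : ℕ} (f : Fin d → Fin m → ℝ)
    (N : Matrix (Fin m) (Fin m) ℝ) (c : ℝ)
    (hfi : ∀ i, f i ⬝ᵥ N.mulVec (f i) = c) (w : Fin d → ℝ) :
    Matrix.trace (N * infoM f w) = c * ∑ i, w i := by
  simp only [infoM, Matrix.mul_sum, Matrix.trace_sum, mul_smul_comm, Matrix.trace_smul,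
    trace_mul_vecMulVec, hfi, smul_eq_mul, Finset.mul_sum]
  refine Finset.sum_congr rfl fun i _ => by ring

/-- Lemma 2: under the normalization hypothesis, if some `w̃ ∈ P⋆`
has all components positive, then the affine dimension of `P⋆` equals `t = d - s`. -/
theorem stmt2 (d m : ℕ) (hd : 0 < d) (hm : 0 < m)
    (f : Fin d → Fin m → ℝ) (Mstar : Matrix (Fin m) (Fin m) ℝ)
    (N : Matrix (Fin m) (Fin m) ℝ) (hN : N.IsSymm)
    (c : ℝ) (hc : 0 < c)
    (hfi : ∀ i, f i ⬝ᵥ N.mulVec (f i) = c)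
    (htr : Matrix.trace (N * Mstar) = c)
    (wt : Fin d → ℝ) (hwt : wt ∈ Pstar f Mstar) (hpos : ∀ i, 0 < wt i) :
    Module.finrank ℝ (affineSpan ℝ (Pstar f Mstar)).direction = d - spanDim f := by
  set P := Pstar f Mstar with hP
  haveI : Nonempty (Fin d) := Fin.pos_iff_nonempty.mp hd
  have hne : (Finset.univ : Finset (Fin d)).Nonempty := Finset.univ_nonempty
  have hdir : (affineSpan ℝ P).direction = LinearMap.ker (infoL f) := by
    rw [direction_affineSpan]
    apply le_antisymm
    · rw [vectorSpan_def, Submodule.span_le]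
      rintro x hx
      obtain ⟨a, ha, b, hb, rfl⟩ := hx
      have : infoL f (a -ᵥ b) = 0 := by
        rw [vsub_eq_sub, map_sub, infoL_apply, infoL_apply, ha.2, hb.2, sub_self]
      simpa [LinearMap.mem_ker] using this
    · intro u hu
      have hTu : infoM f u = 0 := hu
      have hsum0 : ∑ i, u i = 0 := by
        have := trace_mul_infoM f N c hfi u
        rw [hTu] at this
        simp at this
        rcases this with h | h
        · exact absurd h hc.ne'
        · exact h
      set a := Finset.univ.inf' hne wt with haDef
      have ha : 0 < a := (Finset.lt_inf'_iff hne).mpr fun i _ => hpos i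
      set b := Finset.univ.sup' hne (fun i => |u i|) with hbDef
      have hb0 : 0 ≤ b := le_trans (abs_nonneg (u (Classical.arbitrary _)))
        (Finset.le_sup' (fun i => |u i|) (Finset.mem_univ (Classical.arbitrary _)))
      set ε := a / (b + 1) with hεDef
      have hε : 0 < ε := div_pos ha (by linarith)
      have hεa : ε * (b + 1) = a := by
        rw [hεDef]
        exact div_mul_cancel₀ a (ne_of_gt (by linarith))
      have hmem : wt + ε • u ∈ P := by
        refine ⟨⟨fun i => ?_, ?_⟩, ?_⟩
        · have h1 : a ≤ wt i := Finset.inf'_le _ (Finset.mem_univ i)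
          have h2 : |u i| ≤ b := Finset.le_sup' (fun i => |u i|) (Finset.mem_univ i)
          have h3 : -|u i| ≤ u i := neg_abs_le (u i)
          have h4 : ε * (-|u i|) ≤ ε * u i := mul_le_mul_of_nonneg_left h3 hε.le
          have h5 : ε * |u i| ≤ ε * b := mul_le_mul_of_nonneg_left h2 hε.le
          have : (wt + ε • u) i = wt i + ε * u i := rfl
          rw [this]
          nlinarith
        · have : ∑ i, (wt + ε • u) i = (∑ i, wt i) + ε * ∑ i, u i := by
            simp [Pi.add_apply, Pi.smul_apply, smul_eq_mul, Finset.sum_add_distrib,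
              Finset.mul_sum]
          rw [this, hsum0, hwt.1.2]
          ring
        · have : infoM f (wt + ε • u) = infoM f wt + ε • infoM f u := by
            rw [← infoL_apply, ← infoL_apply, ← infoL_apply, map_add, LinearMap.map_smul]
          rw [this, hTu, hwt.2, smul_zero, add_zero]
      have hv : ε • u ∈ vectorSpan ℝ P := by
        have := vsub_mem_vectorSpan ℝ hmem hwt
        simpa [vsub_eq_sub] using this
      have : u = ε⁻¹ • (ε • u) := by
        rw [smul_smul, inv_mul_cancel₀ hε.ne', one_smul]
      rw [this]
      exact Submodule.smul_mem _ _ hv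
  rw [hdir]
  have hrn := LinearMap.finrank_range_add_finrank_ker (infoL f)
  rw [range_infoL] at hrn
  have hfr : Module.finrank ℝ (Fin d → ℝ) = d := by simp
  have hs : spanDim f = Module.finrank ℝ (Submodule.span ℝ
      (Set.range fun i => Matrix.vecMulVec (f i) (f i))) := rfl
  omega
end
end

section
/- (Theorem 1, parts 2 ⇔ 4.) A vector v ∈ ℝ^d is an extreme point of the polytope P⋆ if and only if v ∈ P⋆ and for every w ∈ P⋆ with S(w) ⊆ S(v) one has S(w) = S(v) (i.e., v corresponds to a minimal optimal design: no optimal weight vector is supported on a proper subset of S(v)). -/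
open Matrix BigOperators

noncomputable section

lemma infoM_add {d m : ℕ} (f : Fin d → Fin m → ℝ) (x y : Fin d → ℝ) :
    infoM f (x + y) = infoM f x + infoM f y := by
  simp [infoM, add_smul, Finset.sum_add_distrib]

lemma infoM_smul {d m : ℕ} (f : Fin d → Fin m → ℝ) (a : ℝ) (x : Fin d → ℝ) :
    infoM f (a • x) = a • infoM f x := by
  simp [infoM, Finset.smul_sum, smul_smul]

lemma infoM_sub {d m : ℕ} (f : Fin d → Fin m → ℝ) (x y : Fin d → ℝ) :
    infoM f (x - y) = infoM f x - infoM f y := by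
  simp [infoM, sub_smul, Finset.sum_sub_distrib]

/-- Theorem 1, 2 ⇔ 4: `v` is an extreme point of `P⋆` iff `v ∈ P⋆`
and every `w ∈ P⋆` with `S(w) ⊆ S(v)` satisfies `S(w) = S(v)`. -/
theorem stmt6 (d m : ℕ) (hd : 0 < d) (hm : 0 < m)
    (f : Fin d → Fin m → ℝ) (Mstar : Matrix (Fin m) (Fin m) ℝ)
    (v : Fin d → ℝ) :
    IsExtremePt (Pstar f Mstar) v ↔
      v ∈ Pstar f Mstar ∧
        ∀ w ∈ Pstar f Mstar, supp w ⊆ supp v → supp w = supp v := by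
  constructor
  · rintro ⟨hv, hext⟩
    refine ⟨hv, ?_⟩
    intro w hw hsub
    by_contra hne
    obtain ⟨i₀, hi₀v, hi₀w⟩ : ∃ i, i ∈ supp v ∧ i ∉ supp w := by
      by_contra h
      push_neg at h
      exact hne (hsub.antisymm h)
    have hw0 : ∀ i, v i = 0 → w i = 0 := fun i hi =>
      by_contra fun h => (hsub h) hi
    have hsumv := hv.1.2
    have hvnn := hv.1.1
    have hwnn := hw.1.1
    have hsumw := hw.1.2
    have hwle1 : ∀ i, w i ≤ 1 := by
      intro i
      calc w i ≤ ∑ j, w j := Finset.single_le_sum (fun j _ => hwnn j) (Finset.mem_univ i)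
      _ = 1 := hsumw
    set S : Finset (Fin d) := Finset.univ.filter fun i => v i ≠ 0 with hS
    have hSne : S.Nonempty := by
      by_contra h
      rw [Finset.not_nonempty_iff_eq_empty] at h
      have hz : ∀ i, v i = 0 := by
        intro i
        by_contra hi
        have : i ∈ S := by simp [hS, hi]
        simp [h] at this
      rw [Finset.sum_congr rfl (fun i _ => hz i)] at hsumv
      simp at hsumv
    set ε : ℝ := S.inf' hSne v with hεdef
    have hεpos : 0 < ε := by
      rw [hεdef, Finset.lt_inf'_iff]
      intro i hi
      simp only [hS, Finset.mem_filter] at hi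
      exact lt_of_le_of_ne (hvnn i) (Ne.symm hi.2)
    have hεle : ∀ i, v i ≠ 0 → ε ≤ v i := fun i hi =>
      Finset.inf'_le v (by simp [hS, hi])
    set w₁ : Fin d → ℝ := v + ε • (v - w) with hw₁def
    set w₂ : Fin d → ℝ := v - ε • (v - w) with hw₂def
    have hsum1 : ∑ i, (v i - w i) = 0 := by
      rw [Finset.sum_sub_distrib, hsumv, hsumw, sub_self]
    have hw₁mem : w₁ ∈ Pstar f Mstar := by
      refine ⟨⟨?_, ?_⟩, ?_⟩
      · intro i
        by_cases hvi : v i = 0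
        · simp [hw₁def, hvi, hw0 i hvi]
        · have h1 := hεle i hvi
          have h2 := hwle1 i
          have h3 := hwnn i
          simp only [hw₁def, Pi.add_apply, Pi.smul_apply, Pi.sub_apply, smul_eq_mul]
          nlinarith
      · simp only [hw₁def, Pi.add_apply, Pi.smul_apply, Pi.sub_apply, smul_eq_mul]
        rw [Finset.sum_add_distrib, ← Finset.mul_sum, hsum1, hsumv]
        ring
      · rw [hw₁def, infoM_add, infoM_smul, infoM_sub, hv.2, hw.2]
        simp
    have hw₂mem : w₂ ∈ Pstar f Mstar := by
      have hεle1 : ε ≤ 1 := by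
        obtain ⟨j, hj⟩ := hSne
        simp only [hS, Finset.mem_filter] at hj
        calc ε ≤ v j := hεle j hj.2
        _ ≤ ∑ i, v i := Finset.single_le_sum (fun i _ => hvnn i) (Finset.mem_univ j)
        _ = 1 := hsumv
      refine ⟨⟨?_, ?_⟩, ?_⟩
      · intro i
        by_cases hvi : v i = 0
        · simp [hw₂def, hvi, hw0 i hvi]
        · have h3 := hwnn i
          have h4 := hvnn i
          simp only [hw₂def, Pi.sub_apply, Pi.smul_apply, smul_eq_mul]
          nlinarith
      · simp only [hw₂def, Pi.sub_apply, Pi.smul_apply, smul_eq_mul]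
        rw [Finset.sum_sub_distrib, ← Finset.mul_sum, hsum1, hsumv]
        ring
      · rw [hw₂def, infoM_sub, infoM_smul, infoM_sub, hv.2, hw.2]
        simp
    have hcomb : v = (1/2 : ℝ) • w₁ + (1 - 1/2 : ℝ) • w₂ := by
      funext i
      simp only [hw₁def, hw₂def, Pi.add_apply, Pi.smul_apply, Pi.sub_apply, smul_eq_mul]
      ring
    obtain ⟨h1, _⟩ := hext w₁ hw₁mem w₂ hw₂mem (1/2) (by norm_num) (by norm_num) hcomb
    have hz : ε • (v - w) = 0 := by
      have := h1
      rw [hw₁def] at this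
      rwa [add_eq_left] at this
    have hvw : v = w := by
      rw [smul_eq_zero] at hz
      rcases hz with h | h
      · exact absurd h (ne_of_gt hεpos)
      · exact (sub_eq_zero.mp h)
    exact hi₀w (by rw [← hvw] at hi₀w ⊢; exact hi₀v)
  · rintro ⟨hv, hmin⟩
    refine ⟨hv, ?_⟩
    intro w₁ hw₁ w₂ hw₂ α hα0 hα1 heq
    have hvnn := hv.1.1
    have key : ∀ w₀ ∈ Pstar f Mstar, supp w₀ ⊆ supp v → w₀ = v := by
      intro w₀ hw₀ hsub₀
      by_contra hne
      set u : Fin d → ℝ := w₀ - v with hudef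
      have hune : u ≠ 0 := by
        intro h
        exact hne (by rwa [hudef, sub_eq_zero] at h)
      have husupp : ∀ i, v i = 0 → u i = 0 := by
        intro i hi
        have hw₀i : w₀ i = 0 := by
          by_contra h
          exact (hsub₀ h) hi
        simp [hudef, hw₀i, hi]
      have hsumu : ∑ i, u i = 0 := by
        simp only [hudef, Pi.sub_apply]
        rw [Finset.sum_sub_distrib, hw₀.1.2, hv.1.2, sub_self]
      set T : Finset (Fin d) := Finset.univ.filter fun i => 0 < u i with hT
      have hTne : T.Nonempty := by
        by_contra h
        rw [Finset.not_nonempty_iff_eq_empty] at h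
        have hle : ∀ i ∈ Finset.univ, u i ≤ 0 := by
          intro i _
          by_contra hi
          push_neg at hi
          have : i ∈ T := by simp [hT, hi]
          simp [h] at this
        have := (Finset.sum_eq_zero_iff_of_nonpos hle).mp hsumu
        exact hune (funext fun i => this i (Finset.mem_univ i))
      set t : ℝ := T.inf' hTne (fun i => v i / u i) with htdef
      have hvpos : ∀ i ∈ T, 0 < v i := by
        intro i hi
        simp only [hT, Finset.mem_filter] at hi
        have : v i ≠ 0 := by
          intro h
          rw [husupp i h] at hi
          exact lt_irrefl 0 hi.2
        exact lt_of_le_of_ne (hvnn i) (Ne.symm this)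
      have htpos : 0 < t := by
        rw [htdef, Finset.lt_inf'_iff]
        intro i hi
        have hu : 0 < u i := by
          simp only [hT, Finset.mem_filter] at hi
          exact hi.2
        exact div_pos (hvpos i hi) hu
      set z : Fin d → ℝ := v - t • u with hzdef
      have hzmem : z ∈ Pstar f Mstar := by
        refine ⟨⟨?_, ?_⟩, ?_⟩
        · intro i
          simp only [hzdef, Pi.sub_apply, Pi.smul_apply, smul_eq_mul]
          by_cases hu : 0 < u i
          · have hi : i ∈ T := by simp [hT, hu]
            have := Finset.inf'_le (fun i => v i / u i) hi
            rw [← htdef] at this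
            have : t * u i ≤ v i := by
              rw [← le_div_iff₀ hu] at *
              exact this
            linarith
          · push_neg at hu
            nlinarith [hvnn i, htpos]
        · simp only [hzdef, Pi.sub_apply, Pi.smul_apply, smul_eq_mul]
          rw [Finset.sum_sub_distrib, ← Finset.mul_sum, hsumu, hv.1.2]
          ring
        · have hinfou : infoM f u = 0 := by
            rw [hudef, infoM_sub, hw₀.2, hv.2, sub_self]
          rw [hzdef, infoM_sub, infoM_smul, hinfou, hv.2]
          simp
      have hzsub : supp z ⊆ supp v := by
        intro i hi
        simp only [supp, Set.mem_setOf_eq] at hi ⊢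
        intro h
        apply hi
        simp [hzdef, h, husupp i h]
      have hzeq := hmin z hzmem hzsub
      obtain ⟨istar, histarT, histareq⟩ := Finset.exists_mem_eq_inf' hTne (fun i => v i / u i)
      have hui : 0 < u istar := by
        simp only [hT, Finset.mem_filter] at histarT
        exact histarT.2
      have hzi : z istar = 0 := by
        simp only [hzdef, Pi.sub_apply, Pi.smul_apply, smul_eq_mul]
        rw [← htdef] at histareq
        rw [histareq, div_mul_cancel₀]
        · ring
        · exact ne_of_gt hui
      have hvi : v istar ≠ 0 := ne_of_gt (hvpos istar histarT)
      have : istar ∈ supp z := hzeq ▸ hvi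
      exact this hzi
    have hsub : ∀ w₀ : Fin d → ℝ, w₀ ∈ Pstar f Mstar →
        (∃ w' ∈ Pstar f Mstar, ∃ β : ℝ, 0 < β ∧ β < 1 ∧ v = β • w₀ + (1-β) • w') →
        supp w₀ ⊆ supp v := by
      intro w₀ hw₀ ⟨w', hw', β, hβ0, hβ1, hveq⟩
      intro i hi
      simp only [supp, Set.mem_setOf_eq] at hi ⊢
      intro hvi
      apply hi
      have := congrFun hveq i
      simp only [Pi.add_apply, Pi.smul_apply, smul_eq_mul, hvi] at this
      have h1 := hw₀.1.1 i
      have h2 := hw'.1.1 i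
      nlinarith
    have hs1 : supp w₁ ⊆ supp v :=
      hsub w₁ hw₁ ⟨w₂, hw₂, α, hα0, hα1, heq⟩
    have hs2 : supp w₂ ⊆ supp v := by
      apply hsub w₂ hw₂
      refine ⟨w₁, hw₁, 1 - α, by linarith, by linarith, ?_⟩
      rw [heq]
      simp only [sub_sub_cancel]
      abel
    have h1 : w₁ = v := key w₁ hw₁ hs1
    have h2 : w₂ = v := key w₂ hw₂ hs2
    exact ⟨h1, h2⟩
end
end

section
/- (Proposition 1.) Suppose there exist a symmetric m×m real matrix N and a real number c > 0 such that fᵢᵀ N fᵢ = c for every i = 1,…,d. Then for every w in the probability simplex P there exists w′ ∈ P whose support S(w′) has at most s elements and whose information matrix coincides with that of w, i.e., M(w′) = M(w). In particular, if P⋆ is nonempty then it contains an element supported on at most s points. -/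
open Matrix BigOperators

noncomputable section

/-- Proposition 1: under the normalization hypothesis, every `w ∈ P`
admits `w′ ∈ P` with `|S(w′)| ≤ s` and the same information matrix; in particular a
nonempty `P⋆` contains an element supported on at most `s` points. -/
theorem stmt9 (d m : ℕ) (hd : 0 < d) (hm : 0 < m)
    (f : Fin d → Fin m → ℝ) (Mstar : Matrix (Fin m) (Fin m) ℝ)
    (N : Matrix (Fin m) (Fin m) ℝ) (hN : N.IsSymm)
    (c : ℝ) (hc : 0 < c)
    (hfi : ∀ i, f i ⬝ᵥ N.mulVec (f i) = c) :
    (∀ w ∈ simplexP d, ∃ w' ∈ simplexP d,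
      (supp w').ncard ≤ spanDim f ∧ infoM f w' = infoM f w) ∧
    ((Pstar f Mstar).Nonempty →
      ∃ w' ∈ Pstar f Mstar, (supp w').ncard ≤ spanDim f) := by
  set x : Fin d → Matrix (Fin m) (Fin m) ℝ := fun i => Matrix.vecMulVec (f i) (f i) with hx
  set φ : Matrix (Fin m) (Fin m) ℝ →ₗ[ℝ] ℝ :=
    (Matrix.traceLinearMap (Fin m) ℝ ℝ).comp (LinearMap.mulLeft ℝ Nᵀ) with hφ
  have hφx : ∀ i, φ (x i) = c := by
    intro i
    rw [← hfi i]
    simp only [hφ, hx, LinearMap.comp_apply, LinearMap.mulLeft_apply, Matrix.traceLinearMap_apply,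
      Matrix.trace, Matrix.diag, Matrix.mul_apply, Matrix.vecMulVec_apply, Matrix.transpose_apply,
      dotProduct, Matrix.mulVec, Finset.mul_sum]
    rw [Finset.sum_comm]
    apply Finset.sum_congr rfl; intro j _
    apply Finset.sum_congr rfl; intro k _
    ring
  have main : ∀ w ∈ simplexP d, ∃ w' ∈ simplexP d,
      (supp w').ncard ≤ spanDim f ∧ infoM f w' = infoM f w := by
    rintro w ⟨hw0, hw1⟩
    have hmem : infoM f w ∈ convexHull ℝ (Set.range x) := by
      have h := Finset.centerMass_mem_convexHull (Finset.univ) (fun i _ => hw0 i)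
        (by rw [hw1]; norm_num) (fun i _ => Set.mem_range_self (f := x) i)
      rwa [Finset.centerMass_eq_of_sum_1 _ _ hw1] at h
    rw [convexHull_eq_union] at hmem
    simp only [Set.mem_iUnion] at hmem
    obtain ⟨t, hts, hai, hmem⟩ := hmem
    obtain ⟨wt, hwt0, hwt1, hwtc⟩ := Finset.mem_convexHull'.mp hmem
    -- linear independence of t
    have hli : LinearIndependent ℝ ((↑) : t → Matrix (Fin m) (Fin m) ℝ) := by
      rw [Fintype.linearIndependent_iff]
      intro a ha
      have hsum0 : ∑ y, a y = 0 := by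
        have h1 : φ (∑ y : t, a y • (y : Matrix (Fin m) (Fin m) ℝ)) = 0 := by rw [ha]; simp
        rw [map_sum] at h1
        have h2 : ∀ y : t, φ (a y • (y : Matrix (Fin m) (Fin m) ℝ)) = a y * c := by
          intro y
          obtain ⟨i, hi⟩ := hts y.2
          rw [φ.map_smul, ← hi, hφx i]; simp [smul_eq_mul]
        rw [Finset.sum_congr rfl (fun y _ => h2 y)] at h1
        rw [← Finset.sum_mul] at h1
        exact (mul_eq_zero.mp h1).resolve_right (ne_of_gt hc)
      have := affineIndependent_iff.mp hai Finset.univ a (by simpa using hsum0) (by simpa using ha)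
      intro i; exact this i (Finset.mem_univ i)
    -- cardinality bound
    have hcard : t.card ≤ spanDim f := by
      have h1 : Module.finrank ℝ (Submodule.span ℝ (t : Set (Matrix (Fin m) (Fin m) ℝ))) = t.card :=
        finrank_span_finset_eq_card hli
      rw [← h1]
      exact Submodule.finrank_mono (Submodule.span_mono hts)
    -- choose section
    have hsec : ∀ y ∈ t, ∃ i, x i = y := fun y hy => hts hy
    classical
    set σ : Matrix (Fin m) (Fin m) ℝ → Fin d := fun y =>
      if h : ∃ i, x i = y then h.choose else ⟨0, hd⟩ with hσ
    have hσx : ∀ y ∈ t, x (σ y) = y := by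
      intro y hy
      have h := hsec y hy
      simp only [hσ, dif_pos h]
      exact h.choose_spec
    set w' : Fin d → ℝ := fun j => ∑ y ∈ t.filter (fun y => σ y = j), wt y with hw'
    have hw'0 : ∀ j, 0 ≤ w' j := by
      intro j
      apply Finset.sum_nonneg
      intro y hy
      exact hwt0 y (Finset.mem_filter.mp hy).1
    have hw'1 : ∑ j, w' j = 1 := by
      rw [hw']
      rw [Finset.sum_fiberwise_of_maps_to (fun y _ => Finset.mem_univ (σ y))]
      exact hwt1
    have hinfo : infoM f w' = infoM f w := by
      rw [← hwtc]
      show ∑ j, w' j • x j = ∑ y ∈ t, wt y • y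
      calc ∑ j, w' j • x j = ∑ j, ∑ y ∈ t.filter (fun y => σ y = j), wt y • x j := by
            apply Finset.sum_congr rfl; intro j _
            rw [hw', Finset.sum_smul]
        _ = ∑ j, ∑ y ∈ t.filter (fun y => σ y = j), wt y • y := by
            apply Finset.sum_congr rfl; intro j _
            apply Finset.sum_congr rfl; intro y hy
            obtain ⟨hyt, hyj⟩ := Finset.mem_filter.mp hy
            rw [← hyj, hσx y hyt]
        _ = ∑ y ∈ t, wt y • y := Finset.sum_fiberwise_of_maps_to (fun y _ => Finset.mem_univ (σ y)) _
    refine ⟨w', ⟨hw'0, hw'1⟩, ?_, hinfo⟩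
    have hsupp : supp w' ⊆ ↑(t.image σ) := by
      intro j hj
      simp only [supp, Set.mem_setOf_eq] at hj
      have : (t.filter (fun y => σ y = j)).Nonempty := by
        by_contra h
        rw [Finset.not_nonempty_iff_eq_empty] at h
        apply hj
        show ∑ y ∈ t.filter (fun y => σ y = j), wt y = 0
        rw [h, Finset.sum_empty]
      obtain ⟨y, hy⟩ := this
      obtain ⟨hyt, hyj⟩ := Finset.mem_filter.mp hy
      exact Finset.mem_coe.mpr (Finset.mem_image.mpr ⟨y, hyt, hyj⟩)
    calc (supp w').ncard ≤ (↑(t.image σ) : Set (Fin d)).ncard :=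
          Set.ncard_le_ncard hsupp (t.image σ).finite_toSet
      _ = (t.image σ).card := by rw [Set.ncard_coe_finset]
      _ ≤ t.card := Finset.card_image_le
      _ ≤ spanDim f := hcard
  refine ⟨main, ?_⟩
  rintro ⟨w, hwP, hwM⟩
  obtain ⟨w', hw'P, hcard, hinfo⟩ := main w hwP
  exact ⟨w', ⟨hw'P, by rw [hinfo, hwM]⟩, hcard⟩
end
end

section
/- The supports of the extreme points of P⋆ form an antichain: if v₁ and v₂ are two distinct extreme points of P⋆, then neither S(v₁) ⊆ S(v₂) nor S(v₂) ⊆ S(v₁). -/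
open Matrix BigOperators

noncomputable section

lemma infoM_comb {d m : ℕ} (f : Fin d → Fin m → ℝ) (a b : ℝ) (u w : Fin d → ℝ) :
    infoM f (fun i => a * u i + b * w i) = a • infoM f u + b • infoM f w := by
  unfold infoM
  rw [Finset.smul_sum, Finset.smul_sum, ← Finset.sum_add_distrib]
  exact Finset.sum_congr rfl fun i _ => by rw [add_smul, mul_smul, mul_smul]

lemma aux_key {d m : ℕ} (f : Fin d → Fin m → ℝ) (Mstar : Matrix (Fin m) (Fin m) ℝ)
    (v₁ v₂ : Fin d → ℝ)
    (h₁ : v₁ ∈ Pstar f Mstar)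
    (hv₂ : IsExtremePt (Pstar f Mstar) v₂)
    (hne : v₁ ≠ v₂) (hsub : supp v₁ ⊆ supp v₂) : False := by
  obtain ⟨⟨h₁n, h₁s⟩, h₁M⟩ := h₁
  obtain ⟨⟨⟨h₂n, h₂s⟩, h₂M⟩, hext⟩ := hv₂
  -- the set of positive coordinates of v₂
  set S : Finset (Fin d) := Finset.univ.filter (fun i => 0 < v₂ i) with hS
  have hSne : S.Nonempty := by
    by_contra h
    have : ∀ i, v₂ i = 0 := fun i => by
      rcases eq_or_lt_of_le (h₂n i) with he | hl
      · exact he.symm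
      · exact absurd (⟨i, by simp [hS, hl]⟩ : S.Nonempty) h
    simp [this] at h₂s
  set ε : ℝ := min (S.inf' hSne v₂) 1 with hε
  have hεpos : 0 < ε := by
    apply lt_min _ one_pos
    apply (Finset.lt_inf'_iff _).mpr
    intro i hi
    simpa [hS] using hi
  have hεle1 : ε ≤ 1 := min_le_right _ _
  have hεle : ∀ i, 0 < v₂ i → ε ≤ v₂ i := fun i hi =>
    le_trans (min_le_left _ _) (Finset.inf'_le _ (by simp [hS, hi]))
  have hv₁le : ∀ i, v₁ i ≤ 1 := by
    intro i
    rw [← h₁s]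
    exact Finset.single_le_sum (fun j _ => h₁n j) (Finset.mem_univ i)
  -- if v₂ i = 0 then v₁ i = 0
  have hzero : ∀ i, v₂ i = 0 → v₁ i = 0 := by
    intro i h0
    by_contra h
    exact absurd (hsub h) (by simp [supp, h0])
  set w₁ : Fin d → ℝ := fun i => (1 + ε) * v₂ i + (-ε) * v₁ i with hw₁
  set w₂ : Fin d → ℝ := fun i => (1 - ε) * v₂ i + ε * v₁ i with hw₂
  have hw₁mem : w₁ ∈ Pstar f Mstar := by
    refine ⟨⟨?_, ?_⟩, ?_⟩
    · intro i
      rcases eq_or_lt_of_le (h₂n i) with he | hl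
      · simp [hw₁, ← he, hzero i he.symm]
      · have h1 := hεle i hl
        have h2 := hv₁le i
        have h3 := h₁n i
        simp only [hw₁]
        nlinarith
    · have : ∑ i, w₁ i = (1 + ε) * ∑ i, v₂ i + (-ε) * ∑ i, v₁ i := by
        simp [hw₁, Finset.sum_add_distrib, Finset.mul_sum]
      rw [this, h₁s, h₂s]; ring
    · have : infoM f w₁ = (1 + ε) • infoM f v₂ + (-ε) • infoM f v₁ :=
        infoM_comb f _ _ _ _
      rw [this, h₁M, h₂M, ← add_smul]
      norm_num
  have hw₂mem : w₂ ∈ Pstar f Mstar := by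
    refine ⟨⟨?_, ?_⟩, ?_⟩
    · intro i
      have h2 := h₂n i
      have h3 := h₁n i
      simp only [hw₂]
      nlinarith
    · have : ∑ i, w₂ i = (1 - ε) * ∑ i, v₂ i + ε * ∑ i, v₁ i := by
        simp [hw₂, Finset.sum_add_distrib, Finset.mul_sum]
      rw [this, h₁s, h₂s]; ring
    · have : infoM f w₂ = (1 - ε) • infoM f v₂ + ε • infoM f v₁ :=
        infoM_comb f _ _ _ _
      rw [this, h₁M, h₂M, ← add_smul]
      norm_num
  have hmid : v₂ = (1/2 : ℝ) • w₁ + (1 - 1/2 : ℝ) • w₂ := by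
    funext i
    simp only [hw₁, hw₂, Pi.add_apply, Pi.smul_apply, smul_eq_mul]
    ring
  obtain ⟨he₁, -⟩ := hext w₁ hw₁mem w₂ hw₂mem (1/2) (by norm_num) (by norm_num) hmid
  apply hne
  funext i
  have := congrFun he₁ i
  simp only [hw₁] at this
  have : ε * (v₂ i - v₁ i) = 0 := by linarith
  rcases mul_eq_zero.mp this with h | h
  · exact absurd h (ne_of_gt hεpos)
  · linarith

/-- the supports of the extreme points of `P⋆` form an antichain. -/
theorem stmt12 (d m : ℕ) (hd : 0 < d) (hm : 0 < m)
    (f : Fin d → Fin m → ℝ) (Mstar : Matrix (Fin m) (Fin m) ℝ)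
    (v₁ v₂ : Fin d → ℝ)
    (hv₁ : IsExtremePt (Pstar f Mstar) v₁)
    (hv₂ : IsExtremePt (Pstar f Mstar) v₂)
    (hne : v₁ ≠ v₂) :
    ¬ supp v₁ ⊆ supp v₂ ∧ ¬ supp v₂ ⊆ supp v₁ := by
  exact ⟨fun h => aux_key f Mstar v₁ v₂ hv₁.1 hv₂ hne h,
         fun h => aux_key f Mstar v₂ v₁ hv₂.1 hv₁ (Ne.symm hne) h⟩
end
end

section
/- (Sperner bound on the number of vertex optimal designs.) The set of extreme points of P⋆ is finite, and its cardinality ℓ satisfies ℓ ≤ C(d, ⌊d/2⌋), the binomial coefficient 'd choose ⌊d/2⌋'. -/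
open Matrix BigOperators

noncomputable section

/-!
An extreme point `v'` of a polyhedron `{w ≥ 0, A w = c}` is determined by its support: if another
point `v` of the polyhedron has support inside that of `v'`, then `v' ± t (v - v')` stays in the
polyhedron for small `t`, so `v = v'`. Hence distinct extreme points of `P⋆` have incomparable
supports, and Sperner's theorem bounds their number by `C(d, ⌊d/2⌋)`.
-/

open Filter Topology Function

theorem IsExtremePt.eq_zero_of_add_mem_of_sub_mem {E : Type*} [AddCommGroup E] [Module ℝ E]
    {K : Set E} {v u : E} (hv : IsExtremePt K v) (hadd : v + u ∈ K) (hsub : v - u ∈ K) :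
    u = 0 := by
  have hmid : v = (1 / 2 : ℝ) • (v + u) + (1 - 1 / 2 : ℝ) • (v - u) := by module
  exact add_eq_left.mp (hv.2 _ hadd _ hsub _ (by norm_num) (by norm_num) hmid).1

theorem eventually_forall_abs_mul_le {ι : Type*} [Finite ι] {v u : ι → ℝ} (hv : 0 ≤ v)
    (hvu : ∀ i, v i = 0 → u i = 0) : ∀ᶠ t in 𝓝 (0 : ℝ), ∀ i, |t * u i| ≤ v i := by
  refine eventually_all.2 fun i => ?_
  rcases (hv i).eq_or_lt with hvi | hvi
  · simp [hvu i hvi.symm, ← hvi]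
  · have hcont : Continuous fun t : ℝ => |t * u i| := by fun_prop
    exact hcont.tendsto' 0 0 (by simp) |>.eventually (eventually_le_nhds hvi)

theorem IsExtremePt.eq_of_support_subset {ι F : Type*} [Finite ι] [AddCommGroup F] [Module ℝ F]
    {L : (ι → ℝ) →ₗ[ℝ] F} {c : F} {v v' : ι → ℝ}
    (hv' : IsExtremePt {w | 0 ≤ w ∧ L w = c} v')
    (hv : v ∈ {w | 0 ≤ w ∧ L w = c}) (hsupp : support v ⊆ support v') :
    v = v' := by
  obtain ⟨hv'0, hLv'⟩ := hv'.1
  have hvu : ∀ i, v' i = 0 → (v - v') i = 0 := fun i hi => by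
    simp [hi, notMem_support.mp fun h => (hsupp h) hi]
  obtain ⟨t, hsmall, ht⟩ :=
    ((eventually_forall_abs_mul_le hv'0 hvu).filter_mono nhdsWithin_le_nhds |>.and
      (self_mem_nhdsWithin : {t : ℝ | t ≠ 0} ∈ 𝓝[≠] 0)).exists
  have hmem : ∀ s : ℝ, (∀ i, |s * (v - v') i| ≤ v' i) → v' + s • (v - v') ∈
      {w | 0 ≤ w ∧ L w = c} := fun s hs =>
    ⟨fun i => by simpa [neg_le_iff_add_nonneg'] using neg_le_of_abs_le (hs i),
      by simp [hv.2, hLv']⟩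
  have hzero := hv'.eq_zero_of_add_mem_of_sub_mem (hmem t hsmall)
    (by simpa only [neg_smul, ← sub_eq_add_neg] using hmem (-t) (by simpa using hsmall))
  exact sub_eq_zero.mp ((smul_eq_zero.mp hzero).resolve_left ht)

open Finset in
theorem Set.finite_and_ncard_le_choose_of_eq_of_support_subset {ι β : Type*} [Fintype ι]
    [Zero β] {S : Set (ι → β)} (hS : ∀ v ∈ S, ∀ v' ∈ S, support v ⊆ support v' → v = v') :
    S.Finite ∧ S.ncard ≤ (Fintype.card ι).choose (Fintype.card ι / 2) := by
  classical
  let supportFinset : (ι → β) → Finset ι := fun v => {i | v i ≠ 0}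
  have hsupport : ∀ v, (supportFinset v : Set ι) = support v := fun v => by
    ext; simp [supportFinset]
  have hmono : ∀ v v', supportFinset v ⊆ supportFinset v' → support v ⊆ support v' :=
    fun v v' h => by simpa only [← hsupport] using Finset.coe_subset.mpr h
  have hinj : S.InjOn supportFinset := fun v hv v' hv' h => hS v hv v' hv' (hmono v v' h.le)
  have hfin : S.Finite := Set.Finite.of_finite_image (Set.toFinite _) hinj
  refine ⟨hfin, ?_⟩
  have hanti : IsAntichain (· ⊆ ·) ((hfin.image supportFinset).toFinset : Set (Finset ι)) := by
    rw [Set.Finite.coe_toFinset]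
    rintro _ ⟨v, hv, rfl⟩ _ ⟨v', hv', rfl⟩ hne hsub
    exact hne (congrArg supportFinset (hS v hv v' hv' (hmono v v' hsub)))
  calc S.ncard = (supportFinset '' S).ncard := hinj.ncard_image.symm
    _ = #(hfin.image supportFinset).toFinset := Set.ncard_eq_toFinset_card _ _
    _ ≤ _ := hanti.sperner

/-- The constraints `∑ wᵢ = 1` and `M(w) = M⋆` as one linear equation `A w = (1, M⋆)`. -/
def weightInfoMap {d m : ℕ} (f : Fin d → Fin m → ℝ) :
    (Fin d → ℝ) →ₗ[ℝ] ℝ × Matrix (Fin m) (Fin m) ℝ :=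
  Fintype.linearCombination ℝ fun i => (1, vecMulVec (f i) (f i))

theorem Pstar_eq_setOf_weightInfoMap {d m : ℕ} (f : Fin d → Fin m → ℝ)
    (Mstar : Matrix (Fin m) (Fin m) ℝ) :
    Pstar f Mstar = {w | 0 ≤ w ∧ weightInfoMap f w = (1, Mstar)} := by
  ext w
  simp [Pstar, simplexP, infoM, weightInfoMap, Fintype.linearCombination_apply,
    Prod.ext_iff, Prod.fst_sum, Prod.snd_sum, Pi.le_def, and_assoc]

theorem stmt13_general (d m : ℕ)
    (f : Fin d → Fin m → ℝ) (Mstar : Matrix (Fin m) (Fin m) ℝ) :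
    {v | IsExtremePt (Pstar f Mstar) v}.Finite ∧
    {v | IsExtremePt (Pstar f Mstar) v}.ncard ≤ Nat.choose d (d / 2) := by
  rw [Pstar_eq_setOf_weightInfoMap]
  simpa using Set.finite_and_ncard_le_choose_of_eq_of_support_subset
    (S := {v | IsExtremePt {w | 0 ≤ w ∧ weightInfoMap f w = (1, Mstar)} v})
    fun v hv v' hv' hsupp => hv'.eq_of_support_subset hv.1 hsupp

/-- Sperner bound: the set of extreme points of `P⋆` is finite and
its cardinality is at most `C(d, ⌊d/2⌋)`. -/
theorem stmt13 (d m : ℕ) (hd : 0 < d) (hm : 0 < m)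
    (f : Fin d → Fin m → ℝ) (Mstar : Matrix (Fin m) (Fin m) ℝ) :
    {v | IsExtremePt (Pstar f Mstar) v}.Finite ∧
    {v | IsExtremePt (Pstar f Mstar) v}.ncard ≤ Nat.choose d (d / 2) :=
  stmt13_general d m f Mstar
end
end
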